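/- For a > 0 and integer c ≥ 1, ∫₀^∞ t^{c-1} e^{-t} ln(1 + at) dt = Γ(c) e^{1/a} ∑_{l=0}^{c-1} E_{l+1}(1/a), where E_n is the exponential integral of order n. -/

import Mathlib

/-!
Differentiating `t ^ k * exp (-t) * log (1 + a * t)` and integrating over `(0, ∞)` gives
`I k = k * I (k - 1) + J k`, where `J k = ∫ t ^ k * exp (-t) / (t + z)` with `z = 1 / a`
(the derivative of `log (1 + a * t)` is `1 / (t + z)`). Splitting `t = (t + z) - z` gives
`J (k + 1) = k ! - z * J k`, and this is exactly the recurrence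
`z * E (k + 1) z + (k + 1) * E (k + 2) z = exp (-z)` (again integration by parts) satisfied by
`k ! * exp z * E (k + 1) z`. The base case `J 0 = exp z * E 1 z` is the substitution
`s = 1 + t / z`. Unfolding `I` down to `I 0 = J 0` produces the sum.
-/

open MeasureTheory Real

/-- The exponential integral of order `n`: `E_n(z) = ∫₁^∞ e^{-zt} t^{-n} dt` (for `z > 0`). -/
noncomputable def expInt (n : ℕ) (z : ℝ) : ℝ :=
  ∫ t in Set.Ioi (1 : ℝ), Real.exp (-z * t) * t ^ (-(n : ℝ))

open Set Filter Topology
open scoped Nat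

lemma integrableOn_pow_mul_exp_neg (k : ℕ) :
    IntegrableOn (fun t : ℝ => t ^ k * exp (-t)) (Ioi 0) := by
  refine (GammaIntegral_convergent (s := k + 1) (by positivity)).congr_fun
    (fun t _ => ?_) measurableSet_Ioi
  simp only [add_sub_cancel_right, rpow_natCast, mul_comm]

lemma integral_pow_mul_exp_neg (k : ℕ) :
    ∫ t in Ioi (0 : ℝ), t ^ k * exp (-t) = k ! := by
  rw [← Gamma_nat_eq_factorial, Gamma_eq_integral (by positivity)]
  refine setIntegral_congr_fun measurableSet_Ioi (fun t _ => ?_)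
  simp only [add_sub_cancel_right, rpow_natCast, mul_comm]

lemma integrableOn_pow_mul_exp_neg_mul {g : ℝ → ℝ} {C : ℝ} (k m : ℕ)
    (hg : ContinuousOn g (Ioi 0)) (hbound : ∀ t > 0, |g t| ≤ C * t ^ m) :
    IntegrableOn (fun t : ℝ => t ^ k * exp (-t) * g t) (Ioi 0) := by
  refine ((integrableOn_pow_mul_exp_neg (k + m)).const_mul C).mono' ?_ ?_
  · exact ((continuous_pow k).mul (continuous_exp.comp continuous_neg)).continuousOn.mul hg
      |>.aestronglyMeasurable measurableSet_Ioi
  · filter_upwards [ae_restrict_mem measurableSet_Ioi] with t (ht : 0 < t)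
    rw [norm_mul, norm_of_nonneg (by positivity), Real.norm_eq_abs]
    calc t ^ k * exp (-t) * |g t| ≤ t ^ k * exp (-t) * (C * t ^ m) := by gcongr; exact hbound t ht
      _ = C * (t ^ (k + m) * exp (-t)) := by ring

lemma abs_log_one_add_mul_le {a t : ℝ} (ha : 0 ≤ a) (ht : 0 ≤ t) :
    |log (1 + a * t)| ≤ a * t := by
  have hat : 0 ≤ a * t := mul_nonneg ha ht
  rw [abs_of_nonneg (log_nonneg (by linarith))]
  linarith [log_le_sub_one_of_pos (by linarith : 0 < 1 + a * t)]

section ExpInt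

variable {z : ℝ}

lemma integrableOn_expInt_integrand (n : ℕ) (hz : 0 < z) :
    IntegrableOn (fun t : ℝ => exp (-z * t) * t ^ (-(n : ℝ))) (Ioi 1) := by
  refine (exp_neg_integrableOn_Ioi 1 hz).mono' ?_ ?_
  · refine ContinuousOn.aestronglyMeasurable ?_ measurableSet_Ioi
    exact (continuous_exp.comp (continuous_const.mul continuous_id)).continuousOn.mul
      (continuousOn_id.rpow_const fun t (ht : 1 < t) => Or.inl (by positivity))
  · filter_upwards [ae_restrict_mem measurableSet_Ioi] with t (ht : 1 < t)
    rw [norm_mul, norm_of_nonneg (exp_nonneg _), norm_of_nonneg (by positivity), neg_mul]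
    exact mul_le_of_le_one_right (exp_nonneg _)
      (rpow_le_one_of_one_le_of_nonpos ht.le (by simp))

lemma tendsto_exp_neg_mul_mul_rpow_neg_atTop (n : ℕ) (hz : 0 < z) :
    Tendsto (fun t : ℝ => exp (-z * t) * t ^ (-(n : ℝ))) atTop (𝓝 0) := by
  have hexp : Tendsto (fun t : ℝ => exp (-z * t)) atTop (𝓝 0) := by
    simpa only [Function.comp_def, neg_mul, id_eq] using
      tendsto_exp_neg_atTop_nhds_zero.comp (tendsto_id.const_mul_atTop hz)
  refine squeeze_zero' ?_ ?_ hexp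
  · filter_upwards [eventually_gt_atTop 0] with t ht
    positivity
  · filter_upwards [eventually_ge_atTop 1] with t ht
    exact mul_le_of_le_one_right (exp_nonneg _) (rpow_le_one_of_one_le_of_nonpos ht (by simp))

theorem expInt_recurrence (n : ℕ) (hz : 0 < z) :
    z * expInt n z + n * expInt (n + 1) z = exp (-z) := by
  have hderiv : ∀ t ∈ Ici (1 : ℝ), HasDerivAt (fun t => exp (-z * t) * t ^ (-(n : ℝ)))
      (-z * (exp (-z * t) * t ^ (-(n : ℝ))) +
        -n * (exp (-z * t) * t ^ (-((n + 1 : ℕ) : ℝ)))) t := by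
    intro t (ht : 1 ≤ t)
    have hexp := ((hasDerivAt_id t).const_mul (-z)).exp
    have hpow := hasDerivAt_rpow_const (p := -(n : ℝ)) (Or.inl (by positivity : t ≠ 0))
    refine (hexp.fun_mul hpow).congr_deriv ?_
    rw [show -((n + 1 : ℕ) : ℝ) = -n - 1 by push_cast; ring]
    simp only [id_eq]
    ring
  have hint := ((integrableOn_expInt_integrand n hz).const_mul (-z)).add
    ((integrableOn_expInt_integrand (n + 1) hz).const_mul (-n))
  have hFTC := integral_Ioi_of_hasDerivAt_of_tendsto' hderiv hint
    (tendsto_exp_neg_mul_mul_rpow_neg_atTop n hz)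
  rw [integral_add ((integrableOn_expInt_integrand n hz).const_mul _)
    ((integrableOn_expInt_integrand (n + 1) hz).const_mul _), integral_const_mul,
    integral_const_mul] at hFTC
  simp only [one_rpow, mul_one, zero_sub] at hFTC
  rw [expInt, expInt]
  linarith

lemma integral_exp_neg_mul_inv_add (hz : 0 < z) :
    ∫ t in Ioi (0 : ℝ), exp (-t) * (t + z)⁻¹ = exp z * expInt 1 z := by
  set f : ℝ → ℝ := fun t => 1 + z⁻¹ * t
  have himage : f '' Ioi 0 = Ioi 1 := by
    rw [show f = (1 + ·) ∘ (z⁻¹ * ·) from rfl, image_comp, image_mul_left_Ioi (inv_pos.2 hz),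
      image_const_add_Ioi, mul_zero, add_zero]
  have hderiv : ∀ t ∈ Ioi (0 : ℝ), HasDerivWithinAt f z⁻¹ (Ioi 0) t := fun t _ =>
    (((hasDerivAt_id t).const_mul z⁻¹).const_add 1).hasDerivWithinAt.congr_deriv (mul_one _)
  have hinj : InjOn f (Ioi 0) := fun x _ y _ h => by simpa [f, hz.ne'] using h
  have hchange := integral_image_eq_integral_abs_deriv_smul measurableSet_Ioi hderiv hinj
    (fun s => exp (-z * s) * s ^ (-((1 : ℕ) : ℝ)))
  rw [himage] at hchange
  rw [expInt, hchange, ← integral_const_mul]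
  refine setIntegral_congr_fun measurableSet_Ioi fun t (ht : 0 < t) => ?_
  have hexp : -z * f t = -t - z := by simp only [f]; field_simp; ring
  have hinv : z⁻¹ * (f t)⁻¹ = (t + z)⁻¹ := by simp only [f]; field_simp; ring
  simp only [smul_eq_mul, abs_inv, abs_of_pos hz, Nat.cast_one, rpow_neg_one, hexp, exp_sub,
    ← hinv]
  field_simp

lemma integrableOn_pow_mul_exp_neg_mul_inv_add (k : ℕ) (hz : 0 < z) :
    IntegrableOn (fun t : ℝ => t ^ k * exp (-t) * (t + z)⁻¹) (Ioi 0) := by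
  refine integrableOn_pow_mul_exp_neg_mul (C := z⁻¹) k 0 ?_ fun t (ht : 0 < t) => ?_
  · exact (continuousOn_id.add continuousOn_const).inv₀ fun t (ht : 0 < t) => (add_pos ht hz).ne'
  · rw [pow_zero, mul_one, abs_of_pos (by positivity)]
    exact inv_anti₀ hz (by linarith)

theorem integral_pow_mul_exp_neg_mul_inv_add (k : ℕ) (hz : 0 < z) :
    ∫ t in Ioi (0 : ℝ), t ^ k * exp (-t) * (t + z)⁻¹ = k ! * exp z * expInt (k + 1) z := by
  induction k with
  | zero => simpa using integral_exp_neg_mul_inv_add hz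
  | succ k ih =>
    have hsplit : ∀ t ∈ Ioi (0 : ℝ), t ^ (k + 1) * exp (-t) * (t + z)⁻¹ =
        t ^ k * exp (-t) - z * (t ^ k * exp (-t) * (t + z)⁻¹) := fun t (ht : 0 < t) => by
      field_simp
      ring
    rw [setIntegral_congr_fun measurableSet_Ioi hsplit,
      integral_sub (integrableOn_pow_mul_exp_neg k)
        ((integrableOn_pow_mul_exp_neg_mul_inv_add k hz).const_mul z),
      integral_const_mul, integral_pow_mul_exp_neg, ih]
    have hrec := expInt_recurrence (k + 1) hz
    push_cast [Nat.factorial_succ] at hrec ⊢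
    have hexp : exp z * exp (-z) = 1 := by rw [← exp_add, add_neg_cancel, exp_zero]
    linear_combination (-(k ! : ℝ) * exp z) * hrec - (k ! : ℝ) * hexp

end ExpInt

section LogWeight

variable {a : ℝ}

lemma integrableOn_pow_mul_exp_neg_mul_log (k : ℕ) (ha : 0 ≤ a) :
    IntegrableOn (fun t : ℝ => t ^ k * exp (-t) * log (1 + a * t)) (Ioi 0) := by
  refine integrableOn_pow_mul_exp_neg_mul (C := a) k 1 ?_ fun t (ht : 0 < t) => ?_
  · exact (continuousOn_const.add (continuousOn_const.mul continuousOn_id)).log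
      fun t (ht : 0 < t) => (by positivity : 0 < 1 + a * t).ne'
  · simpa using abs_log_one_add_mul_le ha ht.le

lemma tendsto_pow_mul_exp_neg_mul_log_atTop (k : ℕ) (ha : 0 ≤ a) :
    Tendsto (fun t : ℝ => t ^ k * exp (-t) * log (1 + a * t)) atTop (𝓝 0) := by
  have hdom := (tendsto_pow_mul_exp_neg_atTop_nhds_zero (k + 1)).const_mul a
  rw [mul_zero] at hdom
  refine squeeze_zero_norm' ?_ hdom
  filter_upwards [eventually_ge_atTop 0] with t ht
  rw [norm_mul, norm_of_nonneg (by positivity), Real.norm_eq_abs]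
  calc t ^ k * exp (-t) * |log (1 + a * t)| ≤ t ^ k * exp (-t) * (a * t) := by
        gcongr; exact abs_log_one_add_mul_le ha ht
    _ = a * (t ^ (k + 1) * exp (-t)) := by ring

-- For `k = 0` the truncated exponent `k - 1` is harmless: its coefficient is `0`.
theorem integral_pow_mul_exp_neg_mul_log_recurrence (k : ℕ) (ha : 0 < a) :
    ∫ t in Ioi (0 : ℝ), t ^ k * exp (-t) * log (1 + a * t) =
      k * (∫ t in Ioi (0 : ℝ), t ^ (k - 1) * exp (-t) * log (1 + a * t)) +
        ∫ t in Ioi (0 : ℝ), t ^ k * exp (-t) * (t + a⁻¹)⁻¹ := by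
  have hderiv : ∀ t ∈ Ici (0 : ℝ), HasDerivAt (fun t => t ^ k * exp (-t) * log (1 + a * t))
      (k * (t ^ (k - 1) * exp (-t) * log (1 + a * t)) - t ^ k * exp (-t) * log (1 + a * t) +
        t ^ k * exp (-t) * (t + a⁻¹)⁻¹) t := by
    intro t (ht : 0 ≤ t)
    have hpos : 0 < 1 + a * t := by positivity
    have hlog := (((hasDerivAt_id t).const_mul a).const_add 1).log hpos.ne'
    refine (((hasDerivAt_pow k t).fun_mul (hasDerivAt_neg t).exp).fun_mul hlog).congr_deriv ?_
    have : a * 1 / (1 + a * id t) = (t + a⁻¹)⁻¹ := by simp only [id_eq]; field_simp; ring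
    rw [this, id_eq]
    ring
  have hI := integrableOn_pow_mul_exp_neg_mul_log k ha.le
  have hI' := (integrableOn_pow_mul_exp_neg_mul_log (k - 1) ha.le).const_mul (k : ℝ)
  have hJ := integrableOn_pow_mul_exp_neg_mul_inv_add k (inv_pos.2 ha)
  have hFTC := integral_Ioi_of_hasDerivAt_of_tendsto' hderiv ((hI'.sub hI).add hJ)
    (tendsto_pow_mul_exp_neg_mul_log_atTop k ha.le)
  rw [integral_add ?_ hJ, integral_sub hI' hI, integral_const_mul] at hFTC
  · simp only [mul_zero, add_zero, log_one, sub_zero] at hFTC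
    linarith
  · exact hI'.sub hI

theorem integral_pow_mul_exp_neg_mul_log_eq_sum (k : ℕ) (ha : 0 < a) :
    ∫ t in Ioi (0 : ℝ), t ^ k * exp (-t) * log (1 + a * t) =
      k ! * exp a⁻¹ * ∑ l ∈ Finset.range (k + 1), expInt (l + 1) a⁻¹ := by
  induction k with
  | zero =>
    rw [integral_pow_mul_exp_neg_mul_log_recurrence 0 ha,
      integral_pow_mul_exp_neg_mul_inv_add 0 (inv_pos.2 ha)]
    simp
  | succ k ih =>
    rw [integral_pow_mul_exp_neg_mul_log_recurrence (k + 1) ha, Nat.add_sub_cancel, ih,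
      integral_pow_mul_exp_neg_mul_inv_add (k + 1) (inv_pos.2 ha), Finset.sum_range_succ _ (k + 1)]
    push_cast [Nat.factorial_succ]
    ring

end LogWeight

/-- for `a > 0` and integer `c ≥ 1`,
`∫₀^∞ t^{c-1} e^{-t} ln(1+at) dt = Γ(c) e^{1/a} ∑_{l=0}^{c-1} E_{l+1}(1/a)`. -/
theorem stmt_17 (a : ℝ) (ha : 0 < a) (c : ℕ) (hc : 1 ≤ c) :
    ∫ t in Set.Ioi (0 : ℝ), t ^ ((c : ℝ) - 1) * Real.exp (-t) * Real.log (1 + a * t)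
      = Real.Gamma c * Real.exp (1 / a) * ∑ l ∈ Finset.range c, expInt (l + 1) (1 / a) := by
  obtain ⟨k, rfl⟩ := Nat.exists_eq_add_of_le' hc
  have hpow : ((k + 1 : ℕ) : ℝ) - 1 = (k : ℕ) := by push_cast; ring
  simp only [hpow, rpow_natCast, one_div]
  rw [integral_pow_mul_exp_neg_mul_log_eq_sum k ha, Nat.cast_succ, Gamma_nat_eq_factorial]
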